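/- arXiv:0904.1752 — 4 statements merged into one kernel-verified Lean document; each statement's English description precedes it below -/
import Mathlib

section
/- Every polynomial in 𝓕 is a D0L-growth function; that is, for every real polynomial F such that F(n) is a positive integer for every natural number n, there exist a finite alphabet A, a monoid morphism σ of the free monoid A* into itself, and a word w ∈ A* such that the length of σⁿ(w) equals F(n) for every n ∈ ℕ. -/
/-!
Write `g n = F n ∈ ℕ`. Since `F` is a polynomial, some iterated forward difference of `g`
vanishes, and then each difference `Δⁱ g` is eventually zero, eventually positive or eventually
negative. As `g > 0`, this forces `Δ g ≥ 0` eventually, and summing an expansion of `Δ g`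
with the hockey-stick identity gives, inductively, `g (n + N) = ∑ cᵢ C(n + i, i)` with `cᵢ ∈ ℕ`.
The right-hand side is the growth of `∏ aᵢ ^ cᵢ` under `aᵢ ↦ a₀ a₁ ⋯ aᵢ`, because
`|σⁿ(aᵢ)| = C(n + i, i)`. The first `N` values are then put in front one at a time, by a new
start letter sent to the old initial word and padded with letters sent to the empty word.
-/

/-- A function `f : ℕ → ℝ` is a D0L-growth function if there is a D0L-system
`(A, σ, w)` (with `A` a finite alphabet, `σ` a monoid morphism of the free
monoid over `A` into itself, and `w` a word over `A`) such that `f n` is the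
length of `σⁿ(w)` for every `n`. -/
def IsD0LGrowth (f : ℕ → ℝ) : Prop :=
  ∃ (A : Type) (_ : Fintype A) (σ : FreeMonoid A →* FreeMonoid A) (w : FreeMonoid A),
    ∀ n : ℕ, f n = ((⇑σ)^[n] w).length

open Finset Filter fwdDiff Polynomial

lemma tendsto_atTop_of_eventually_fwdDiff_pos {g : ℕ → ℤ}
    (h : ∀ᶠ n in atTop, 0 < Δ_[1] g n) : Tendsto g atTop atTop := by
  obtain ⟨n₀, hn₀⟩ := eventually_atTop.1 h
  have grow : ∀ j : ℕ, g n₀ + j ≤ g (j + n₀) := by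
    intro j
    induction j with
    | zero => simp
    | succ j ih =>
      have := hn₀ (j + n₀) le_add_self
      rw [fwdDiff, add_right_comm] at this
      push_cast
      omega
  rw [← tendsto_add_atTop_iff_nat n₀]
  exact tendsto_atTop_mono grow (tendsto_atTop_add_const_left _ _ tendsto_natCast_atTop_atTop)

lemma tendsto_atBot_of_eventually_fwdDiff_neg {g : ℕ → ℤ}
    (h : ∀ᶠ n in atTop, Δ_[1] g n < 0) : Tendsto g atTop atBot := by
  rw [← tendsto_neg_atTop_iff]
  refine tendsto_atTop_of_eventually_fwdDiff_pos (h.mono fun n hn => ?_)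
  simp only [fwdDiff] at hn ⊢
  omega

lemma eventually_sign_trichotomy_of_fwdDiff_iter_eq_zero {k : ℕ} {g : ℕ → ℤ}
    (hk : (Δ_[1])^[k] g = 0) :
    (∀ᶠ n in atTop, g n = 0) ∨ (∀ᶠ n in atTop, 0 < g n) ∨ (∀ᶠ n in atTop, g n < 0) := by
  induction k generalizing g with
  | zero => exact .inl (.of_forall fun n => congrFun hk n)
  | succ k ih =>
    rcases ih (g := Δ_[1] g) hk with hconst | hpos | hneg
    · have : EventuallyConst g atTop := by
        obtain ⟨n₀, hn₀⟩ := eventually_atTop.1 hconst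
        exact eventuallyConst_atTop_nat.2 ⟨n₀, fun m hm => sub_eq_zero.1 (hn₀ m hm)⟩
      obtain ⟨c, hc⟩ := this.eventuallyEq_const
      rcases lt_trichotomy c 0 with h | rfl | h
      · exact .inr (.inr (hc.mono fun n hn => hn ▸ h))
      · exact .inl hc
      · exact .inr (.inl (hc.mono fun n hn => hn ▸ h))
    · exact .inr (.inl ((tendsto_atTop_of_eventually_fwdDiff_pos hpos).eventually_gt_atTop 0))
    · exact .inr (.inr ((tendsto_atBot_of_eventually_fwdDiff_neg hneg).eventually_lt_atBot 0))

lemma eventually_fwdDiff_nonneg {k : ℕ} {g : ℕ → ℤ} (hk : (Δ_[1])^[k + 1] g = 0)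
    (hg : ∀ᶠ n in atTop, 0 ≤ g n) : ∀ᶠ n in atTop, 0 ≤ Δ_[1] g n := by
  rcases eventually_sign_trichotomy_of_fwdDiff_iter_eq_zero (g := Δ_[1] g) hk with h | h | h
  · exact h.mono fun n hn => hn.ge
  · exact h.mono fun n hn => hn.le
  · obtain ⟨n, hn, hn'⟩ :=
      (hg.and ((tendsto_atBot_of_eventually_fwdDiff_neg h).eventually_lt_atBot 0)).exists
    exact absurd hn' hn.not_gt

lemma exists_add_eq_sum_mul_choose {k : ℕ} {g : ℕ → ℤ} (hk : (Δ_[1])^[k] g = 0)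
    (hg : ∀ n, 0 ≤ g n) :
    ∃ (N : ℕ) (c : ℕ → ℕ), ∀ n, g (n + N) = ∑ i ∈ range k, (c i : ℤ) * (n + i).choose i := by
  induction k generalizing g with
  | zero => exact ⟨0, 0, fun n => congrFun hk n⟩
  | succ k ih =>
    obtain ⟨M, hM⟩ := eventually_atTop.1 (eventually_fwdDiff_nonneg hk (.of_forall hg))
    obtain ⟨N, c, hc⟩ := ih (g := fun n => Δ_[1] g (n + M))
      (funext fun n => by rw [fwdDiff_iter_comp_add]; exact congrFun hk (n + M))
      (fun n => hM _ le_add_self)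
    refine ⟨N + M + 1, fun | 0 => (g (N + M)).toNat | i + 1 => c i, fun n => ?_⟩
    calc g (n + (N + M + 1))
        = g (N + M) + ∑ j ∈ range (n + 1), Δ_[1] g (j + (N + M)) := by
          have := Finset.sum_range_sub (fun j => g (j + (N + M))) (n + 1)
          simp only [fwdDiff, add_right_comm _ 1 (N + M), zero_add] at this ⊢
          rw [this, ← add_assoc]
          ring
      _ = g (N + M) + ∑ j ∈ range (n + 1), ∑ i ∈ range k, (c i : ℤ) * (j + i).choose i := by
          simp only [← hc, add_assoc]
      _ = g (N + M) + ∑ i ∈ range k, (c i : ℤ) * (n + i + 1).choose (i + 1) := by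
          simp only [sum_comm (s := range (n + 1)), ← mul_sum, ← Nat.cast_sum,
            Nat.sum_range_add_choose]
      _ = _ := by
          rw [sum_range_succ', Int.toNat_of_nonneg (hg _)]
          simp [add_comm, ← add_assoc]

lemma fwdDiff_iter_natDegree_succ_eq_zero {R : Type*} [CommRing R] [CharZero R] (P : R[X])
    {g : ℕ → ℤ} (hg : ∀ n : ℕ, (g n : R) = P.eval (n : R)) :
    (Δ_[1])^[P.natDegree + 1] g = 0 := by
  funext n
  apply Int.cast_injective (α := R)
  have := congrFun P.fwdDiff_iter_degree_add_one_eq_zero (n : R)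
  rw [fwdDiff_iter_eq_sum_shift] at this ⊢
  push_cast
  simpa [hg] using this

namespace FreeMonoid

variable {α : Type*}

lemma length_iterate_list_prod (σ : FreeMonoid α →* FreeMonoid α) (n : ℕ)
    (l : List (FreeMonoid α)) :
    (σ^[n] l.prod).length = (l.map fun x => (σ^[n] x).length).sum := by
  induction l with
  | nil => simp [length_one]
  | cons x l ih => simp [length_mul, ih]

lemma length_pow (x : FreeMonoid α) (m : ℕ) : (x ^ m).length = m * x.length := by
  induction m with
  | zero => simp [length_one]
  | succ m ih => rw [pow_succ, length_mul, ih, add_one_mul]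

lemma length_map {β : Type*} (f : α → β) (x : FreeMonoid α) : (map f x).length = x.length := by
  simp [length]

/-- `a i ↦ a 0 a 1 ⋯ a i` -/
def counterMorphism (k : ℕ) : FreeMonoid (Fin k) →* FreeMonoid (Fin k) :=
  lift fun i => (List.ofFn fun j : Fin (i + 1) => of (Fin.castLE i.isLt j)).prod

lemma counterMorphism_of {k : ℕ} (i : Fin k) :
    counterMorphism k (of i) = (List.ofFn fun j : Fin (i + 1) => of (Fin.castLE i.isLt j)).prod :=
  lift_eval_of _ _

lemma length_iterate_counterMorphism_of {k : ℕ} (n : ℕ) (i : Fin k) :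
    ((counterMorphism k)^[n] (of i)).length = (n + i).choose i := by
  induction n generalizing i with
  | zero => simp [length_of]
  | succ n ih =>
    rw [Function.iterate_succ_apply, counterMorphism_of, length_iterate_list_prod]
    simp only [List.map_ofFn, List.sum_ofFn, Function.comp_def, ih, Fin.val_castLE]
    rw [Fin.sum_univ_eq_sum_range (fun j => (n + j).choose j)]
    calc ∑ j ∈ range (i + 1), (n + j).choose j
        = ∑ j ∈ range (i + 1), (j + n).choose n :=
          sum_congr rfl fun j _ => by rw [add_comm, Nat.choose_symm_add]
      _ = (n + 1 + i).choose i := by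
          rw [Nat.sum_range_add_choose, show (i : ℕ) + n + 1 = n + 1 + i by ring,
            Nat.choose_symm_add]

/-- Extends `σ` to `α ⊕ Bool` by `inr true ↦ w` and `inr false ↦ 1`. -/
def startMorphism (σ : FreeMonoid α →* FreeMonoid α) (w : FreeMonoid α) :
    FreeMonoid (α ⊕ Bool) →* FreeMonoid (α ⊕ Bool) :=
  lift <| Sum.elim (fun a => map Sum.inl (σ (of a))) fun b => if b then map Sum.inl w else 1

lemma semiconj_map_inl_startMorphism (σ : FreeMonoid α →* FreeMonoid α) (w : FreeMonoid α) :
    Function.Semiconj (map Sum.inl) σ (startMorphism σ w) := by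
  have : (map Sum.inl).comp σ = (startMorphism σ w).comp (map Sum.inl) :=
    hom_eq fun a => by simp [startMorphism]
  exact fun u => DFunLike.congr_fun this u

end FreeMonoid

open FreeMonoid

theorem isD0LGrowth_sum_mul_choose (k : ℕ) (c : ℕ → ℕ) :
    IsD0LGrowth fun n => ((∑ i ∈ range k, c i * (n + i).choose i : ℕ) : ℝ) := by
  refine ⟨Fin k, inferInstance, counterMorphism k, (List.ofFn fun i : Fin k => of i ^ c i).prod,
    fun n => ?_⟩
  simp [length_iterate_list_prod, List.sum_ofFn, length_pow,
    length_iterate_counterMorphism_of, Fin.sum_univ_eq_sum_range (fun i => c i * (n + i).choose i)]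

theorem IsD0LGrowth.of_succ {f : ℕ → ℝ} (h : IsD0LGrowth fun n => f (n + 1)) {m : ℕ} (hm : 0 < m)
    (h0 : f 0 = m) : IsD0LGrowth f := by
  obtain ⟨A, _, σ, w, hw⟩ := h
  refine ⟨A ⊕ Bool, inferInstance, startMorphism σ w, of (.inr true) * of (.inr false) ^ (m - 1),
    fun n => ?_⟩
  cases n with
  | zero =>
    simp only [Function.iterate_zero_apply, length_mul, length_pow, length_of, h0]
    norm_cast
    omega
  | succ n =>
    have hstart :
        startMorphism σ w (of (.inr true) * of (.inr false) ^ (m - 1)) = map Sum.inl w := by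
      simp [startMorphism]
    rw [Function.iterate_succ_apply, hstart,
      ← (semiconj_map_inl_startMorphism σ w).iterate_right n w, length_map]
    exact hw n

theorem IsD0LGrowth.of_add {f : ℕ → ℝ} {N : ℕ} (h : IsD0LGrowth fun n => f (n + N))
    (hpos : ∀ n < N, ∃ m : ℕ, 0 < m ∧ f n = m) : IsD0LGrowth f := by
  induction N generalizing f with
  | zero => simpa using h
  | succ N ih =>
    obtain ⟨m, hm, h0⟩ := hpos 0 N.succ_pos
    exact (ih (f := fun n => f (n + 1)) h fun n hn => hpos (n + 1) (by omega)).of_succ hm h0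

theorem stmt_0 (F : Polynomial ℝ)
    (hF : ∀ n : ℕ, ∃ m : ℕ, 0 < m ∧ F.eval (n : ℝ) = (m : ℝ)) :
    IsD0LGrowth (fun n : ℕ => F.eval (n : ℝ)) := by
  choose f hf_pos hf using hF
  have hΔ : (Δ_[1])^[F.natDegree + 1] (fun n => (f n : ℤ)) = 0 :=
    fwdDiff_iter_natDegree_succ_eq_zero F fun n => by simp [hf]
  obtain ⟨N, c, hc⟩ := exists_add_eq_sum_mul_choose hΔ fun n => Int.natCast_nonneg (f n)
  refine IsD0LGrowth.of_add (N := N) ?_ fun n _ => ⟨f n, hf_pos n, hf n⟩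
  convert isD0LGrowth_sum_mul_choose (F.natDegree + 1) c using 2 with n
  rw [hf]
  exact_mod_cast hc n
end

section
/- Every polynomial in 𝓕 has rational coefficients: if F is a real polynomial such that F(n) is a positive integer for every natural number n, then every coefficient of F is a rational number. -/
theorem stmt_8 (F : Polynomial ℝ)
    (hF : ∀ n : ℕ, ∃ m : ℕ, 0 < m ∧ F.eval (n : ℝ) = (m : ℝ)) :
    ∀ i : ℕ, ∃ q : ℚ, F.coeff i = (q : ℝ) := by
  choose m _ hm using hF
  set d := F.natDegree with hd
  set s : Finset ℕ := Finset.range (d + 1) with hs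
  set Q : Polynomial ℚ := Lagrange.interpolate s (fun i => (i : ℚ)) (fun i => (m i : ℚ)) with hQ
  have hinjQ : Set.InjOn (fun i : ℕ => (i : ℚ)) s := fun a _ b _ h => Nat.cast_injective h
  have hinjR : Set.InjOn (fun i : ℕ => (i : ℝ)) s := fun a _ b _ h => Nat.cast_injective h
  have hcard : (s.card : WithBot ℕ) = (d + 1 : ℕ) := by simp [hs]
  have hFQ : F = Q.map (algebraMap ℚ ℝ) := by
    apply Polynomial.eq_of_degrees_lt_of_eval_index_eq s hinjR
    · rw [hcard]
      exact lt_of_le_of_lt Polynomial.degree_le_natDegree (by exact_mod_cast Nat.lt_succ_self d)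
    · rw [hcard]
      refine lt_of_le_of_lt (Polynomial.degree_map_le) ?_
      have := Lagrange.degree_interpolate_lt (r := fun i => (m i : ℚ)) hinjQ
      rwa [hcard] at this
    · intro i hi
      have h1 : (Q.map (algebraMap ℚ ℝ)).eval ((i : ℚ) : ℝ) = ((Q.eval (i : ℚ) : ℚ) : ℝ) := by
        rw [Polynomial.eval_map]
        exact Polynomial.eval₂_at_apply _ _
      have h2 : Q.eval (i : ℚ) = (m i : ℚ) :=
        Lagrange.eval_interpolate_at_node _ hinjQ hi
      simp only [Rat.cast_natCast] at h1
      rw [h1, h2, hm i]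
      simp
  intro i
  exact ⟨Q.coeff i, by rw [hFQ, Polynomial.coeff_map]; rfl⟩
end

section
/- Let f, g : ℕ → ℝ be such that g(n) = f(n+1) for every n ∈ ℕ and f(0) is a positive integer. Then g is a D0L-growth function if and only if f is a D0L-growth function. -/
/-!
Dropping the first term of a D0L-growth function corresponds to starting from `σ(w)` instead
of `w`. Conversely, if `n ↦ f (n + 1)` is realised by `(A, σ, w)` and `f 0 = m ≥ 1`, add a
start letter that `σ` sends to `w` together with `m - 1` padding letters that `σ` erases: the
start word then has length `m`, and from the first step on the system runs as `(A, σ, w)`.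
-/

theorem IsD0LGrowth.comp_succ {f : ℕ → ℝ} (hf : IsD0LGrowth f) :
    IsD0LGrowth fun n => f (n + 1) := by
  obtain ⟨A, hA, σ, w, hw⟩ := hf
  exact ⟨A, hA, σ, σ w, fun n => hw (n + 1)⟩

namespace FreeMonoid

variable {A : Type} (σ : FreeMonoid A →* FreeMonoid A) (w : FreeMonoid A)

/-- The letter `inr true` is the start letter, sent to `w`; the letters `inr false` are
padding, erased in one step. -/
def startExtension : FreeMonoid (A ⊕ Bool) →* FreeMonoid (A ⊕ Bool) :=
  lift <| Sum.elim (fun a => map Sum.inl (σ (of a))) fun b => if b then map Sum.inl w else 1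

def startWord (m : ℕ) : FreeMonoid (A ⊕ Bool) :=
  ofList (Sum.inr true :: List.replicate (m - 1) (Sum.inr false))

theorem length_startWord {m : ℕ} (hm : 0 < m) : (startWord (A := A) m).length = m := by
  simp only [startWord, length, toList_ofList, List.length_cons, List.length_replicate]
  omega

theorem startExtension_startWord (m : ℕ) :
    startExtension σ w (startWord m) = map Sum.inl w := by
  simp [startExtension, startWord, lift_ofList, List.map_replicate]

theorem semiconj_map_inl_startExtension :
    Function.Semiconj (map Sum.inl) σ (startExtension σ w) := by
  have h : (startExtension σ w).comp (map Sum.inl) = (map Sum.inl).comp σ :=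
    hom_eq fun a => by simp [startExtension]
  exact fun u => (DFunLike.congr_fun h u).symm

theorem startExtension_iterate_succ_startWord (m n : ℕ) :
    (⇑(startExtension σ w))^[n + 1] (startWord m) = map Sum.inl ((⇑σ)^[n] w) := by
  rw [Function.iterate_succ_apply, startExtension_startWord,
    ((semiconj_map_inl_startExtension σ w).iterate_right n).eq]

end FreeMonoid

open FreeMonoid in
theorem IsD0LGrowth.of_comp_succ {f : ℕ → ℝ} (hf : IsD0LGrowth fun n => f (n + 1))
    {m : ℕ} (hm : 0 < m) (hf0 : f 0 = m) : IsD0LGrowth f := by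
  obtain ⟨A, _, σ, w, hw⟩ := hf
  refine ⟨A ⊕ Bool, inferInstance, startExtension σ w, startWord m, ?_⟩
  rintro (_ | n)
  · rw [hf0, Function.iterate_zero_apply, length_startWord hm]
  · rw [startExtension_iterate_succ_startWord]
    exact (hw n).trans (congrArg Nat.cast (List.length_map _).symm)

theorem stmt_11 (f g : ℕ → ℝ) (hg : ∀ n : ℕ, g n = f (n + 1))
    (hf0 : ∃ m : ℕ, 0 < m ∧ f 0 = (m : ℝ)) :
    IsD0LGrowth g ↔ IsD0LGrowth f := by
  obtain ⟨m, hm, hf0⟩ := hf0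
  obtain rfl : g = fun n => f (n + 1) := funext hg
  exact ⟨fun h => h.of_comp_succ hm hf0, IsD0LGrowth.comp_succ⟩
end

section
/- Let F be a real polynomial in 𝓕 of degree d. If ∂ⁱF(0) is positive for each i ∈ {0, 1, …, d}, then the polynomial ∂ⁱF belongs to 𝓕 for each i ∈ {0, 1, …, d}; that is, ∂ⁱF(n) is a positive integer for every n ∈ ℕ. -/
open Polynomial

/-- The finite-difference operator on real polynomials: `∂F(x) = F(x+1) - F(x)`. -/
noncomputable def pdiff (F : Polynomial ℝ) : Polynomial ℝ := F.comp (X + 1) - F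

lemma pdiff_eval (G : Polynomial ℝ) (x : ℝ) :
    (pdiff G).eval x = G.eval (x + 1) - G.eval x := by
  simp [pdiff, eval_comp]

lemma pdiff_C (a : ℝ) : pdiff (C a) = 0 := by
  simp [pdiff]

lemma natDegree_pdiff_lt (G : Polynomial ℝ) (h : 0 < G.natDegree) :
    (pdiff G).natDegree < G.natDegree := by
  have hG : G ≠ 0 := fun h0 => by simp [h0] at h
  by_cases hz : pdiff G = 0
  · simpa [hz] using h
  · apply natDegree_lt_natDegree hz
    unfold pdiff
    have h1 : ((X : Polynomial ℝ) + 1).natDegree = 1 := by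
      simpa using natDegree_X_add_C (1 : ℝ)
    have hlc : (G.comp ((X : Polynomial ℝ) + 1)).leadingCoeff = G.leadingCoeff := by
      have h2 : ((X : Polynomial ℝ) + 1).leadingCoeff = 1 := by
        simpa using leadingCoeff_X_add_C (1 : ℝ)
      rw [leadingCoeff_comp (by rw [h1]; norm_num), h2, one_pow, mul_one]
    have hne : G.comp ((X : Polynomial ℝ) + 1) ≠ 0 := by
      intro h0
      apply hG
      rw [← leadingCoeff_eq_zero, ← hlc, h0, leadingCoeff_zero]
    have hnd : (G.comp ((X : Polynomial ℝ) + 1)).natDegree = G.natDegree := by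
      rw [natDegree_comp, h1, mul_one]
    have hdd : (G.comp ((X : Polynomial ℝ) + 1)).degree = G.degree := by
      rw [degree_eq_natDegree hne, degree_eq_natDegree hG, hnd]
    rw [← hdd]
    exact degree_sub_lt hdd hne hlc

theorem stmt_16 (F : Polynomial ℝ) (d : ℕ) (hd : F.natDegree = d)
    (hF : ∀ n : ℕ, ∃ m : ℕ, 0 < m ∧ F.eval (n : ℝ) = (m : ℝ))
    (hpos : ∀ i : ℕ, i ≤ d → 0 < (pdiff^[i] F).eval 0) :
    ∀ i : ℕ, i ≤ d → ∀ n : ℕ, ∃ m : ℕ, 0 < m ∧ (pdiff^[i] F).eval (n : ℝ) = (m : ℝ) := by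
  have hstep : ∀ i : ℕ, pdiff^[i+1] F = pdiff (pdiff^[i] F) := fun i =>
    Function.iterate_succ_apply' pdiff i F
  -- integrality
  have hint : ∀ i : ℕ, ∀ n : ℕ, ∃ z : ℤ, (pdiff^[i] F).eval (n : ℝ) = (z : ℝ) := by
    intro i
    induction i with
    | zero =>
      intro n
      obtain ⟨m, _, hm⟩ := hF n
      exact ⟨m, by simpa using hm⟩
    | succ i ih =>
      intro n
      obtain ⟨z1, hz1⟩ := ih (n + 1)
      obtain ⟨z2, hz2⟩ := ih n
      refine ⟨z1 - z2, ?_⟩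
      rw [hstep, pdiff_eval]
      push_cast at hz1 ⊢
      rw [← hz1, ← hz2]
  -- degree bound
  have hdeg : ∀ i : ℕ, (pdiff^[i] F).natDegree ≤ d - i := by
    intro i
    induction i with
    | zero => simpa using hd.le
    | succ i ih =>
      rcases Nat.eq_zero_or_pos (pdiff^[i] F).natDegree with h0 | h0
      · rw [hstep, eq_C_of_natDegree_eq_zero h0, pdiff_C]
        exact le_of_eq_of_le natDegree_zero (Nat.zero_le _)
      · have := natDegree_pdiff_lt _ h0
        rw [hstep]
        omega
  -- vanishing at level d+1
  have hzero : pdiff^[d+1] F = 0 := by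
    have h0 : (pdiff^[d] F).natDegree = 0 := by
      have := hdeg d; omega
    rw [hstep, eq_C_of_natDegree_eq_zero h0, pdiff_C]
  -- positivity
  have hposn : ∀ n : ℕ, ∀ i : ℕ, i ≤ d → 0 < (pdiff^[i] F).eval (n : ℝ) := by
    intro n
    induction n with
    | zero => intro i hi; simpa using hpos i hi
    | succ n ih =>
      intro i hi
      have key : (pdiff^[i] F).eval ((n : ℝ) + 1)
          = (pdiff^[i] F).eval (n : ℝ) + (pdiff^[i+1] F).eval (n : ℝ) := by
        rw [hstep, pdiff_eval]; ring
      have hnn : 0 ≤ (pdiff^[i+1] F).eval (n : ℝ) := by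
        rcases lt_or_eq_of_le hi with h | h
        · exact (ih (i + 1) h).le
        · rw [h, hzero]; simp
      have := ih i hi
      push_cast
      rw [key]
      linarith
  intro i hi n
  obtain ⟨z, hz⟩ := hint i n
  have hp := hposn n i hi
  rw [hz] at hp
  have hz0 : 0 < z := by exact_mod_cast hp
  refine ⟨z.toNat, by omega, ?_⟩
  rw [hz]
  exact_mod_cast congrArg (Int.cast : ℤ → ℝ) (Int.toNat_of_nonneg hz0.le).symm
end
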